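/- arXiv:2411.03525 — 2 statements merged into one kernel-verified Lean document; each statement's English description precedes it below -/
import Mathlib

section
/- Let p, m ≥ 1 be natural numbers and q_1,…,q_m integers each coprime to p. Fix k ∈ {0,…,p−1}, n ∈ ℕ, a subset N ⊆ M, and let N̄ = M ∖ N. For every x ∈ Ω_N(k+np), the vector y = (x̄_j)_{j∈N̄} of signed reductions of the coordinates of x indexed by N̄ satisfies: (i) Σ_{j∈N̄} q_j y_j ≡ 0 (mod p); (ii) |y_j| < p for every j ∈ N̄; and (iii) ‖y‖₁ = k + tp for some integer t with 0 ≤ t ≤ n − |N|. In particular y ∈ C(N̄, k+tp) for some 0 ≤ t ≤ n − |N|. -/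
/-- `OmegaSet p q U k` is the set `Ω(U,k)` of integer vectors supported on `U`
satisfying the congruence `∑ i ∈ U, q i * x i ≡ 0 (mod p)` with 1-norm `k`. -/
def OmegaSet (p : ℕ) {m : ℕ} (q : Fin m → ℤ) (U : Finset (Fin m)) (k : ℕ) :
    Set (Fin m → ℤ) :=
  {x | (∀ i, i ∉ U → x i = 0) ∧ (p : ℤ) ∣ ∑ i ∈ U, q i * x i ∧
    ∑ i ∈ U, (x i).natAbs = k}

/-- `CSet p q U k` is the set `C(U,k)` of points of `Ω(U,k)` with all coordinates
of absolute value less than `p`. -/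
def CSet (p : ℕ) {m : ℕ} (q : Fin m → ℤ) (U : Finset (Fin m)) (k : ℕ) :
    Set (Fin m → ℤ) :=
  {x ∈ OmegaSet p q U k | ∀ i ∈ U, |x i| < (p : ℤ)}

/-- `OmegaN p q N k n` is the set `Ω_N(k+np)` of points of `Ω(M,k+np)` whose
coordinate `x i` is a negative multiple of `p` exactly when `i ∈ N`. -/
def OmegaN (p : ℕ) {m : ℕ} (q : Fin m → ℤ) (N : Finset (Fin m)) (k n : ℕ) :
    Set (Fin m → ℤ) :=
  {x ∈ OmegaSet p q Finset.univ (k + n * p) |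
    ∀ i, (x i < 0 ∧ (p : ℤ) ∣ x i) ↔ i ∈ N}

/-- The signed reduction `x̄` of an integer modulo `p`:
`x mod p` if `x ≥ 0` and `(x mod p) - p` if `x < 0`. -/
def sred (p : ℕ) (x : ℤ) : ℤ := if 0 ≤ x then x % (p : ℤ) else x % (p : ℤ) - p

/-- Binomial coefficient `a choose b` with upper argument in `ℤ`,
equal to `0` when `a < 0` (and, via `Nat.choose`, when `a < b`). -/
def ibinom (a : ℤ) (b : ℕ) : ℕ := if 0 ≤ a then a.toNat.choose b else 0

/-!
Signed reduction moves an integer by a multiple of `p` towards `0` without changing its sign, so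
on `N̄` it preserves the congruence modulo `p` and lowers the 1-norm by a multiple of `p`. The
coordinates in `N` are nonzero multiples of `p`: they vanish modulo `p` and contribute at least
`|N| p` to the norm. So the reduced norm is `k + np` minus a multiple `c p` with `|N| ≤ c`, and
`k < p` forces `c ≤ n`.
-/

theorem le_and_eq_add_sub_mul_of_add_mul_eq {S c k n p : ℕ} (hk : k < p)
    (h : S + c * p = k + n * p) : c ≤ n ∧ S = k + (n - c) * p := by
  have hcn : c ≤ n := by
    by_contra! hlt
    have := Nat.mul_le_mul_right p hlt
    rw [Nat.succ_mul] at this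
    omega
  refine ⟨hcn, ?_⟩
  have := Nat.mul_le_mul_right p hcn
  rw [Nat.sub_mul]
  omega

section sred

variable {p : ℕ}

theorem intCast_sred (x : ℤ) : ((sred p x : ℤ) : ZMod p) = x := by
  rw [ZMod.intCast_eq_intCast_iff_dvd_sub, sred]
  split_ifs
  · exact ⟨x / p, by rw [Int.emod_def]; ring⟩
  · exact ⟨x / p + 1, by rw [Int.emod_def]; ring⟩

theorem abs_sred_lt (hp : 0 < p) {x : ℤ} (hx : ¬(x < 0 ∧ (p : ℤ) ∣ x)) :
    |sred p x| < p := by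
  have hp' : (0 : ℤ) < p := by exact_mod_cast hp
  have h0 := Int.emod_nonneg x hp'.ne'
  have hlt := Int.emod_lt_of_pos x hp'
  rw [sred]
  split_ifs with hx0
  · rwa [abs_of_nonneg h0]
  · have : x % p ≠ 0 := fun h => hx ⟨by omega, Int.dvd_of_emod_eq_zero h⟩
    rw [abs_of_neg (by omega)]
    omega

theorem exists_natAbs_eq_natAbs_sred_add_mul (hp : 0 < p) (x : ℤ) :
    ∃ c : ℕ, x.natAbs = (sred p x).natAbs + c * p := by
  have hp' : (0 : ℤ) < p := by exact_mod_cast hp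
  have hdiv := Int.mul_ediv_add_emod x p
  have h0 := Int.emod_nonneg x hp'.ne'
  have hlt := Int.emod_lt_of_pos x hp'
  rw [sred]
  split_ifs with hx0
  · have := Int.ediv_nonneg hx0 hp'.le
    refine ⟨(x / p).toNat, ?_⟩
    zify
    rw [abs_of_nonneg hx0, abs_of_nonneg h0, Int.toNat_of_nonneg this]
    linarith
  · have := Int.ediv_neg_of_neg_of_pos (not_le.mp hx0) hp'
    refine ⟨(-(x / p) - 1).toNat, ?_⟩
    zify
    rw [abs_of_neg (not_le.mp hx0), abs_of_neg (by omega : x % p - p < 0),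
      Int.toNat_of_nonneg (by omega)]
    linarith

theorem exists_sum_natAbs_eq_sum_natAbs_sred_add_mul {ι : Type*} (hp : 0 < p)
    (s : Finset ι) (x : ι → ℤ) :
    ∃ C : ℕ, ∑ i ∈ s, (x i).natAbs = ∑ i ∈ s, (sred p (x i)).natAbs + C * p := by
  choose c hc using fun i => exists_natAbs_eq_natAbs_sred_add_mul hp (x i)
  refine ⟨∑ i ∈ s, c i, ?_⟩
  rw [Finset.sum_mul, ← Finset.sum_add_distrib]
  exact Finset.sum_congr rfl fun i _ => hc i

theorem exists_card_le_and_sum_natAbs_eq_mul {ι : Type*} (hp : 0 < p) (s : Finset ι) {x : ι → ℤ}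
    (hx : ∀ i ∈ s, x i ≠ 0 ∧ (p : ℤ) ∣ x i) :
    ∃ D : ℕ, s.card ≤ D ∧ ∑ i ∈ s, (x i).natAbs = D * p := by
  have hdvd : ∀ i ∈ s, p ∣ (x i).natAbs := fun i hi => Int.natCast_dvd.mp (hx i hi).2
  refine ⟨∑ i ∈ s, (x i).natAbs / p, ?_, ?_⟩
  · rw [Finset.card_eq_sum_ones]
    refine Finset.sum_le_sum fun i hi => ?_
    rw [Nat.one_le_div_iff hp]
    exact Nat.le_of_dvd (Int.natAbs_pos.mpr (hx i hi).1) (hdvd i hi)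
  · rw [Finset.sum_mul]
    exact Finset.sum_congr rfl fun i hi => (Nat.div_mul_cancel (hdvd i hi)).symm

theorem dvd_sum_mul_sred_compl {ι : Type*} [Fintype ι] [DecidableEq ι] {q x : ι → ℤ}
    {N : Finset ι} (hdvd : (p : ℤ) ∣ ∑ i, q i * x i) (hN : ∀ i ∈ N, (p : ℤ) ∣ x i) :
    (p : ℤ) ∣ ∑ i ∈ Nᶜ, q i * sred p (x i) := by
  rw [← ZMod.intCast_zmod_eq_zero_iff_dvd] at hdvd ⊢
  simp only [← ZMod.intCast_zmod_eq_zero_iff_dvd] at hN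
  push_cast [intCast_sred] at hdvd ⊢
  rwa [← Finset.sum_add_sum_compl N, Finset.sum_eq_zero fun i hi => by rw [hN i hi, mul_zero],
    zero_add] at hdvd

theorem ite_mem_CSet {m p : ℕ} {q y : Fin m → ℤ} {U : Finset (Fin m)} {k : ℕ}
    (hdvd : (p : ℤ) ∣ ∑ i ∈ U, q i * y i) (hnorm : ∑ i ∈ U, (y i).natAbs = k)
    (hlt : ∀ i ∈ U, |y i| < p) :
    (fun i => if i ∈ U then y i else 0) ∈ CSet p q U k := by
  refine ⟨⟨fun i hi => if_neg hi, ?_, ?_⟩, fun i hi => ?_⟩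
  · simpa only [mul_ite, mul_zero, Finset.sum_ite_mem, Finset.inter_self] using hdvd
  · simpa only [apply_ite Int.natAbs, Int.natAbs_zero, Finset.sum_ite_mem, Finset.inter_self]
      using hnorm
  · simpa only [if_pos hi] using hlt i hi

theorem sred_mem_CSet_general (p m : ℕ) (hp : 1 ≤ p) (q : Fin m → ℤ)
    (k n : ℕ) (hk : k < p)
    (N : Finset (Fin m)) (x : Fin m → ℤ) (hx : x ∈ OmegaN p q N k n) :
    ((p : ℤ) ∣ ∑ j ∈ Nᶜ, q j * sred p (x j)) ∧
      (∀ j ∈ Nᶜ, |sred p (x j)| < (p : ℤ)) ∧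
      ∃ t : ℕ, t + N.card ≤ n ∧
        ∑ j ∈ Nᶜ, (sred p (x j)).natAbs = k + t * p ∧
        (fun j => if j ∈ Nᶜ then sred p (x j) else 0) ∈ CSet p q Nᶜ (k + t * p) := by
  obtain ⟨⟨-, hdvd, hnorm⟩, hN⟩ := hx
  have hcong := dvd_sum_mul_sred_compl hdvd fun j hj => ((hN j).mpr hj).2
  have hlt : ∀ j ∈ Nᶜ, |sred p (x j)| < p := fun j hj =>
    abs_sred_lt hp fun h => Finset.mem_compl.mp hj ((hN j).mp h)
  obtain ⟨C, hC⟩ := exists_sum_natAbs_eq_sum_natAbs_sred_add_mul hp Nᶜ x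
  obtain ⟨D, hND, hD⟩ := exists_card_le_and_sum_natAbs_eq_mul hp N fun j hj =>
    ⟨((hN j).mpr hj).1.ne, ((hN j).mpr hj).2⟩
  have hsum : ∑ j ∈ Nᶜ, (sred p (x j)).natAbs + (C + D) * p = k + n * p := by
    rw [← hnorm, ← Finset.sum_add_sum_compl N, hC, hD]
    ring
  obtain ⟨hCD, hS⟩ := le_and_eq_add_sub_mul_of_add_mul_eq hk hsum
  exact ⟨hcong, hlt, n - (C + D), by omega, hS, ite_mem_CSet hcong hS hlt⟩

/-- **Lemma (the reduction map is well defined).** For `x ∈ Ω_N(k+np)`, the vector of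
signed reductions of the coordinates of `x` indexed by `N̄ = M \ N` satisfies the
congruence condition, has all coordinates of absolute value `< p`, and has 1-norm
`k + tp` for some `0 ≤ t ≤ n - |N|`; in particular it lies in `C(N̄, k+tp)`. -/
theorem sred_mem_CSet (p m : ℕ) (hp : 1 ≤ p) (hm : 1 ≤ m) (q : Fin m → ℤ)
    (hq : ∀ i, IsCoprime (q i) (p : ℤ)) (k n : ℕ) (hk : k < p)
    (N : Finset (Fin m)) (x : Fin m → ℤ) (hx : x ∈ OmegaN p q N k n) :
    ((p : ℤ) ∣ ∑ j ∈ Nᶜ, q j * sred p (x j)) ∧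
      (∀ j ∈ Nᶜ, |sred p (x j)| < (p : ℤ)) ∧
      ∃ t : ℕ, t + N.card ≤ n ∧
        ∑ j ∈ Nᶜ, (sred p (x j)).natAbs = k + t * p ∧
        (fun j => if j ∈ Nᶜ then sred p (x j) else 0) ∈ CSet p q Nᶜ (k + t * p) :=
  sred_mem_CSet_general p m hp q k n hk N x hx
end sred
end

section
/- Let p, m ≥ 1 be natural numbers and q_1,…,q_m integers each coprime to p. For every k ∈ {0,…,p−1}, n ∈ ℕ and N ⊆ M with N̄ = M ∖ N, the cardinality of Ω_N(k+np) equals Σ_{t=0}^{m−1} binom(n−t+|N̄|−1, m−1) · γ(N̄, k+tp), where binom(a,b) is the binomial coefficient 'a choose b', understood to be 0 whenever a < b or a < 0 (with a = n−t+|N̄|−1 computed in ℤ). -/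
/-! Write each coordinate of `x ∈ Ω_N(k+np)` in base `p` with two signed digits: `c_i` is
`|x_i| mod p` carrying the sign of `x_i`, and `x_i = c_i ± p s_i`, except that a negative multiple
of `p` (exactly the coordinates in `N`, where `c_i = 0`) is written `x_i = -p (s_i + 1)`.
Then `x ≡ c (mod p)` coordinatewise and `‖x‖₁ = ‖c‖₁ + p (|N| + Σ s)`. Hence `‖c‖₁ ≡ k (mod p)`,
and as every `|c_i| < p` we get `‖c‖₁ = k + t p` with `t < m`. For each such `t` the map
`x ↦ (c, s)` is a bijection onto `C(N̄, k + t p) × {s ∈ ℕ^M : |N| + t + Σ s = n}`, and the second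
factor has `binom(n - t + |N̄| - 1, m - 1)` elements by stars and bars. -/

def signedMod (p : ℕ) (x : ℤ) : ℤ := x.sign * ((x.natAbs % p : ℕ) : ℤ)

def signedJoin (p : ℕ) (r : ℤ) (s : ℕ) : ℤ := if 0 ≤ r then r + p * s else r - p * s

section SignedDigits

variable {p : ℕ}

lemma natAbs_signedMod (x : ℤ) : (signedMod p x).natAbs = x.natAbs % p := by
  rcases eq_or_ne x 0 with rfl | hx
  · simp [signedMod]
  · rw [signedMod, Int.natAbs_mul, Int.natAbs_natCast, Int.natAbs_sign_of_ne_zero hx, one_mul]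

lemma abs_signedMod_lt (hp : 0 < p) (x : ℤ) : |signedMod p x| < p := by
  rw [Int.abs_eq_natAbs, natAbs_signedMod]
  exact_mod_cast Nat.mod_lt _ hp

lemma signedMod_eq_zero_of_dvd {x : ℤ} (hx : (p : ℤ) ∣ x) : signedMod p x = 0 := by
  rw [← Int.natAbs_eq_zero, natAbs_signedMod, ← Nat.dvd_iff_mod_eq_zero]
  exact Int.natCast_dvd.mp hx

lemma natAbs_eq_mod_add_div (x : ℤ) :
    (x.natAbs : ℤ) = ((x.natAbs % p : ℕ) : ℤ) + p * ((x.natAbs / p : ℕ) : ℤ) := by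
  rw [← Nat.cast_mul, ← Nat.cast_add, Nat.mod_add_div]

lemma dvd_sub_signedMod (x : ℤ) : (p : ℤ) ∣ x - signedMod p x :=
  ⟨x.sign * (x.natAbs / p : ℕ), by
    unfold signedMod
    linear_combination -Int.sign_mul_natAbs x + x.sign * natAbs_eq_mod_add_div (p := p) x⟩

lemma signedJoin_signedMod {x : ℤ} (hx : ¬(x < 0 ∧ (p : ℤ) ∣ x)) :
    signedJoin p (signedMod p x) (x.natAbs / p) = x := by
  have hdiv := natAbs_eq_mod_add_div (p := p) x
  have hsign := Int.sign_mul_natAbs x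
  rcases lt_trichotomy x 0 with hneg | rfl | hpos
  · have hmod : x.natAbs % p ≠ 0 := fun h =>
      hx ⟨hneg, Int.natCast_dvd.mpr (Nat.dvd_of_mod_eq_zero h)⟩
    rw [Int.sign_eq_neg_one_of_neg hneg] at hsign
    rw [signedJoin, signedMod, Int.sign_eq_neg_one_of_neg hneg, if_neg (by omega)]
    linear_combination hdiv + hsign
  · simp [signedJoin, signedMod]
  · rw [Int.sign_eq_one_of_pos hpos] at hsign
    rw [signedJoin, signedMod, Int.sign_eq_one_of_pos hpos, if_pos (by omega)]
    linear_combination -hdiv + hsign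

variable {r : ℤ} (s : ℕ)

lemma natAbs_signedJoin : (signedJoin p r s).natAbs = r.natAbs + p * s := by
  unfold signedJoin; split <;> omega

lemma dvd_signedJoin_sub : (p : ℤ) ∣ signedJoin p r s - r := by
  unfold signedJoin; split
  · exact ⟨s, by ring⟩
  · exact ⟨-s, by ring⟩

lemma natAbs_signedJoin_div (hr : |r| < p) : (signedJoin p r s).natAbs / p = s := by
  have := abs_lt.mp hr
  rw [natAbs_signedJoin, Nat.add_mul_div_left _ _ (by omega), Nat.div_eq_of_lt (by omega),
    zero_add]

lemma signedMod_signedJoin (hr : |r| < p) : signedMod p (signedJoin p r s) = r := by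
  have := abs_lt.mp hr
  have hps : (0 : ℤ) ≤ p * s := by positivity
  have hmod : (signedJoin p r s).natAbs % p = r.natAbs := by
    rw [natAbs_signedJoin, Nat.add_mul_mod_self_left, Nat.mod_eq_of_lt (by omega)]
  rw [signedMod, hmod]
  unfold signedJoin
  rcases lt_trichotomy r 0 with hneg | rfl | hpos
  · rw [if_neg (by omega), Int.sign_eq_neg_one_of_neg (a := r - p * s) (by omega)]; omega
  · simp
  · rw [if_pos (by omega), Int.sign_eq_one_of_pos (a := r + p * s) (by omega)]; omega

lemma not_neg_and_dvd_signedJoin (hr : |r| < p) :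
    ¬(signedJoin p r s < 0 ∧ (p : ℤ) ∣ signedJoin p r s) := by
  rintro ⟨hneg, hdvd⟩
  have h0 : r = 0 := by
    simpa [signedMod_signedJoin s hr] using signedMod_eq_zero_of_dvd hdvd
  simp only [signedJoin, h0, le_refl, if_true, zero_add] at hneg
  have : (0 : ℤ) ≤ p * s := by positivity
  omega

end SignedDigits

lemma ibinom_natCast (a b : ℕ) : ibinom a b = a.choose b := by
  simp [ibinom]

lemma ibinom_of_lt {a : ℤ} {b : ℕ} (h : a < b) : ibinom a b = 0 := by
  unfold ibinom
  split_ifs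
  · exact Nat.choose_eq_zero_of_lt (by omega)
  · rfl

lemma Set.Finite.ncard_eq_sum_ncard_fiber {α β : Type*} [DecidableEq β] {s : Set α}
    (hs : s.Finite) {f : α → β} {t : Finset β} (hf : ∀ x ∈ s, f x ∈ t) :
    s.ncard = ∑ b ∈ t, {x ∈ s | f x = b}.ncard := by
  rw [Set.ncard_eq_toFinset_card s hs,
    Finset.card_eq_sum_card_fiberwise fun x hx => hf x (by simpa using hx)]
  refine Finset.sum_congr rfl fun b _ => ?_
  rw [← Set.ncard_coe_finset]
  congr 1
  ext x
  simp

lemma ncard_setOf_add_sum_eq {ι : Type*} [Fintype ι] [DecidableEq ι]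
    (hι : 0 < Fintype.card ι) (a n : ℕ) :
    {s : ι → ℕ | a + ∑ i, s i = n}.ncard
      = ibinom ((n : ℤ) - a + Fintype.card ι - 1) (Fintype.card ι - 1) := by
  rcases lt_or_ge n a with hlt | hle
  · rw [ibinom_of_lt (by omega), ← Set.ncard_empty (ι → ℕ)]
    congr 1
    ext s
    simp only [Set.mem_ofPred_eq, Set.mem_empty_iff_false, iff_false]
    omega
  · obtain ⟨d, rfl⟩ := Nat.exists_eq_add_of_le hle
    have e : {s : ι → ℕ | a + ∑ i, s i = a + d} ≃ Sym ι d :=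
      (Equiv.subtypeEquivRight fun s => by simp).trans (Sym.equivNatSumOfFintype ι d).symm
    rw [← Nat.card_coe_set_eq, Nat.card_congr e, Nat.card_eq_fintype_card,
      Sym.card_sym_eq_choose, show ((a + d : ℕ) : ℤ) - a + Fintype.card ι - 1
        = ((Fintype.card ι - 1 + d : ℕ) : ℤ) by push_cast [Nat.cast_sub hι]; ring,
      ibinom_natCast, Nat.choose_symm_add, Nat.sub_add_comm hι]

lemma finite_OmegaSet (p : ℕ) {m : ℕ} (q : Fin m → ℤ) (U : Finset (Fin m)) (k : ℕ) :
    (OmegaSet p q U k).Finite := by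
  refine (Set.Finite.pi' fun _ => Set.finite_Icc (-(k : ℤ)) k).subset fun x hx i => ?_
  obtain ⟨hsupp, -, hnorm⟩ := hx
  have : (x i).natAbs ≤ k := by
    by_cases hi : i ∈ U
    · exact hnorm ▸ Finset.single_le_sum (f := fun j => (x j).natAbs) (fun j _ => Nat.zero_le _) hi
    · simp [hsupp i hi]
  simp only [Set.mem_Icc]
  omega

lemma mem_CSet_iff {p m : ℕ} {q : Fin m → ℤ} {U : Finset (Fin m)} {j : ℕ} {c : Fin m → ℤ} :
    c ∈ CSet p q U j ↔ (∀ i ∉ U, c i = 0) ∧ (p : ℤ) ∣ ∑ i, q i * c i ∧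
      ∑ i, (c i).natAbs = j ∧ ∀ i ∈ U, |c i| < p := by
  have hsum {M : Type} [AddCommMonoid M] (f : Fin m → ℤ → M) (hf : ∀ i, f i 0 = 0)
      (hsupp : ∀ i ∉ U, c i = 0) : ∑ i ∈ U, f i (c i) = ∑ i, f i (c i) :=
    Finset.sum_subset (Finset.subset_univ U) fun i _ hi => by rw [hsupp i hi, hf]
  constructor
  · rintro ⟨⟨hsupp, hdvd, hnorm⟩, hlt⟩
    rw [hsum _ (fun _ => mul_zero _) hsupp] at hdvd
    rw [hsum _ (fun _ => rfl) hsupp] at hnorm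
    exact ⟨hsupp, hdvd, hnorm, hlt⟩
  · rintro ⟨hsupp, hdvd, hnorm, hlt⟩
    rw [← hsum _ (fun _ => mul_zero _) hsupp] at hdvd
    rw [← hsum _ (fun _ => rfl) hsupp] at hnorm
    exact ⟨⟨hsupp, hdvd, hnorm⟩, hlt⟩

lemma dvd_sum_mul_iff {p m : ℕ} (q : Fin m → ℤ) {x y : Fin m → ℤ}
    (h : ∀ i, (p : ℤ) ∣ x i - y i) :
    (p : ℤ) ∣ ∑ i, q i * x i ↔ (p : ℤ) ∣ ∑ i, q i * y i := by
  refine dvd_iff_dvd_of_dvd_sub ?_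
  rw [← Finset.sum_sub_distrib]
  exact Finset.dvd_sum fun i _ => by rw [← mul_sub]; exact (h i).mul_left _

section Decomposition

variable (p : ℕ) {m : ℕ} (N : Finset (Fin m))

def residues (x : Fin m → ℤ) : Fin m → ℤ := fun i => signedMod p (x i)

def carries (x : Fin m → ℤ) : Fin m → ℕ := fun i => (x i).natAbs / p - if i ∈ N then 1 else 0

def assemble (c : Fin m → ℤ) (s : Fin m → ℕ) : Fin m → ℤ :=
  fun i => if i ∈ N then -((p * (s i + 1) : ℕ) : ℤ) else signedJoin p (c i) (s i)

variable {p N}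

lemma assemble_residues_carries {x : Fin m → ℤ}
    (hN : ∀ i, (x i < 0 ∧ (p : ℤ) ∣ x i) ↔ i ∈ N) :
    assemble p N (residues p x) (carries p N x) = x := by
  funext i
  by_cases hi : i ∈ N
  · obtain ⟨hneg, hdvd⟩ := (hN i).mpr hi
    have hmul := Nat.mul_div_cancel' (Int.natCast_dvd.mp hdvd)
    have hquot : (x i).natAbs / p ≠ 0 := fun h => by rw [h] at hmul; omega
    simp only [assemble, carries, hi, if_true,
      Nat.sub_add_cancel (Nat.one_le_iff_ne_zero.mpr hquot), hmul]
    omega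
  · simpa [assemble, residues, carries, hi] using signedJoin_signedMod (by rwa [hN i])

variable {c : Fin m → ℤ} (s : Fin m → ℕ)

lemma natAbs_assemble (hc : ∀ i ∈ N, c i = 0) (i : Fin m) :
    (assemble p N c s i).natAbs = (c i).natAbs + p * (s i + if i ∈ N then 1 else 0) := by
  by_cases hi : i ∈ N
  · simp only [assemble, hi, hc i hi, if_true, Int.natAbs_neg, Int.natAbs_natCast,
      Int.natAbs_zero, zero_add]
  · simp only [assemble, hi, if_false, add_zero, natAbs_signedJoin]

lemma sum_natAbs_assemble (hc : ∀ i ∈ N, c i = 0) :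
    ∑ i, (assemble p N c s i).natAbs = ∑ i, (c i).natAbs + p * (N.card + ∑ i, s i) := by
  simp only [natAbs_assemble s hc, Finset.sum_add_distrib, ← Finset.mul_sum]
  simp [add_comm]

lemma dvd_assemble_sub (hc : ∀ i ∈ N, c i = 0) (i : Fin m) :
    (p : ℤ) ∣ assemble p N c s i - c i := by
  by_cases hi : i ∈ N
  · simp only [assemble, hi, hc i hi, if_true, sub_zero, dvd_neg, Nat.cast_mul]
    exact dvd_mul_right _ _
  · simpa [assemble, hi] using dvd_signedJoin_sub (p := p) (r := c i) (s i)

lemma residues_assemble (hc0 : ∀ i ∈ N, c i = 0) (hc : ∀ i ∉ N, |c i| < p) :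
    residues p (assemble p N c s) = c := by
  funext i
  by_cases hi : i ∈ N
  · rw [hc0 i hi]
    exact signedMod_eq_zero_of_dvd (by simpa [hc0 i hi] using dvd_assemble_sub s hc0 i)
  · simpa [residues, assemble, hi] using signedMod_signedJoin (s i) (hc i hi)

lemma neg_and_dvd_assemble_iff (hp : 0 < p) (hc : ∀ i ∉ N, |c i| < p) (i : Fin m) :
    (assemble p N c s i < 0 ∧ (p : ℤ) ∣ assemble p N c s i) ↔ i ∈ N := by
  by_cases hi : i ∈ N
  · simp only [assemble, hi, if_true, iff_true, dvd_neg, Nat.cast_mul, Left.neg_neg_iff]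
    exact ⟨by positivity, dvd_mul_right _ _⟩
  · simpa [assemble, hi] using not_neg_and_dvd_signedJoin (s i) (hc i hi)

lemma carries_assemble (hp : 0 < p) (hc : ∀ i ∉ N, |c i| < p) :
    carries p N (assemble p N c s) = s := by
  funext i
  by_cases hi : i ∈ N
  · simp only [carries, assemble, hi, if_true, Int.natAbs_neg, Int.natAbs_natCast,
      Nat.mul_div_cancel_left _ hp, Nat.add_sub_cancel]
  · simpa [carries, assemble, hi] using natAbs_signedJoin_div (s i) (hc i hi)

end Decomposition

def level (p : ℕ) {m : ℕ} (x : Fin m → ℤ) : ℕ := (∑ i, (residues p x i).natAbs) / p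

section Fibers

variable {p m : ℕ} {q : Fin m → ℤ} {N : Finset (Fin m)} {k n : ℕ}

lemma level_lt (hp : 0 < p) (hm : 0 < m) (x : Fin m → ℤ) : level p x < m := by
  refine Nat.div_lt_of_lt_mul ?_
  calc ∑ i, (residues p x i).natAbs < ∑ _i : Fin m, p :=
        Finset.sum_lt_sum_of_nonempty (Finset.univ_nonempty_iff.mpr ⟨⟨0, hm⟩⟩) fun i _ => by
          rw [residues, natAbs_signedMod]; exact Nat.mod_lt _ hp
    _ = p * m := by simp [mul_comm]

lemma residues_eq_zero {x : Fin m → ℤ} (hN : ∀ i, (x i < 0 ∧ (p : ℤ) ∣ x i) ↔ i ∈ N) :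
    ∀ i ∈ N, residues p x i = 0 :=
  fun i hi => signedMod_eq_zero_of_dvd ((hN i).mpr hi).2

lemma sum_natAbs_residues_add {x : Fin m → ℤ} (hx : x ∈ OmegaN p q N k n) :
    ∑ i, (residues p x i).natAbs + p * (N.card + ∑ i, carries p N x i) = k + n * p := by
  obtain ⟨⟨-, -, hnorm⟩, hN⟩ := hx
  rwa [← assemble_residues_carries hN, sum_natAbs_assemble _ (residues_eq_zero hN)] at hnorm

lemma sum_natAbs_residues (hk : k < p) {x : Fin m → ℤ} (hx : x ∈ OmegaN p q N k n) :
    ∑ i, (residues p x i).natAbs = k + level p x * p := by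
  have hmod : (∑ i, (residues p x i).natAbs) % p = k := by
    simpa [Nat.add_mul_mod_self_left, Nat.add_mul_mod_self_right, Nat.mod_eq_of_lt hk]
      using congrArg (· % p) (sum_natAbs_residues_add hx)
  rw [level, mul_comm, ← hmod, Nat.mod_add_div]

lemma card_add_level_add_sum_carries (hk : k < p) {x : Fin m → ℤ}
    (hx : x ∈ OmegaN p q N k n) : N.card + level p x + ∑ i, carries p N x i = n := by
  have hsum := sum_natAbs_residues_add hx
  rw [sum_natAbs_residues hk hx] at hsum
  refine Nat.eq_of_mul_eq_mul_left (show 0 < p by omega) ?_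
  linarith

lemma residues_mem_CSet (hk : k < p) {x : Fin m → ℤ} (hx : x ∈ OmegaN p q N k n) :
    residues p x ∈ CSet p q Nᶜ (k + level p x * p) := by
  refine mem_CSet_iff.mpr ⟨fun i hi => residues_eq_zero hx.2 i (by simpa using hi),
    (dvd_sum_mul_iff q fun i => dvd_sub_signedMod (x i)).mp hx.1.2.1,
    sum_natAbs_residues hk hx, fun i _ => abs_signedMod_lt (by omega) (x i)⟩

lemma assemble_mem_OmegaN {t : ℕ} {c : Fin m → ℤ} {s : Fin m → ℕ} (hp : 0 < p)
    (hc : c ∈ CSet p q Nᶜ (k + t * p)) (hs : N.card + t + ∑ i, s i = n) :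
    assemble p N c s ∈ OmegaN p q N k n := by
  obtain ⟨hc0, hdvd, hnorm, hlt⟩ := mem_CSet_iff.mp hc
  replace hc0 : ∀ i ∈ N, c i = 0 := fun i hi => hc0 i (by simpa using hi)
  refine ⟨⟨fun i hi => absurd (Finset.mem_univ i) hi, ?_, ?_⟩,
    neg_and_dvd_assemble_iff s hp fun i hi => hlt i (by simpa using hi)⟩
  · exact (dvd_sum_mul_iff q (dvd_assemble_sub s hc0)).mpr hdvd
  · rw [sum_natAbs_assemble s hc0, hnorm, ← hs]
    ring

lemma level_assemble (hk : k < p) {t : ℕ} {c : Fin m → ℤ} (s : Fin m → ℕ)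
    (hc : c ∈ CSet p q Nᶜ (k + t * p)) : level p (assemble p N c s) = t := by
  obtain ⟨hc0, -, hnorm, hlt⟩ := mem_CSet_iff.mp hc
  rw [level, residues_assemble s (fun i hi => hc0 i (by simpa using hi))
    fun i hi => hlt i (by simpa using hi), hnorm, Nat.add_mul_div_right _ _ (by omega),
    Nat.div_eq_of_lt hk, zero_add]

def levelFiberEquiv (q : Fin m → ℤ) (N : Finset (Fin m)) (n t : ℕ) (hk : k < p) :
    {x ∈ OmegaN p q N k n | level p x = t}
      ≃ CSet p q Nᶜ (k + t * p) × {s : Fin m → ℕ | N.card + t + ∑ i, s i = n} where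
  toFun x :=
    (⟨residues p x, by have h := residues_mem_CSet hk x.2.1; rwa [x.2.2] at h⟩,
      ⟨carries p N x, by have h := card_add_level_add_sum_carries hk x.2.1; rwa [x.2.2] at h⟩)
  invFun cs := ⟨assemble p N cs.1 cs.2, assemble_mem_OmegaN (by omega) cs.1.2 cs.2.2,
    level_assemble hk _ cs.1.2⟩
  left_inv x := Subtype.ext (assemble_residues_carries x.2.1.2)
  right_inv cs := by
    obtain ⟨hc0, -, -, hlt⟩ := mem_CSet_iff.mp cs.1.2
    have hlt' : ∀ i ∉ N, |cs.1.1 i| < p := fun i hi => hlt i (by simpa using hi)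
    exact Prod.ext
      (Subtype.ext (residues_assemble _ (fun i hi => hc0 i (by simpa using hi)) hlt'))
      (Subtype.ext (carries_assemble _ (by omega) hlt'))

end Fibers

theorem omegaN_card_general (p m : ℕ) (hm : 1 ≤ m) (q : Fin m → ℤ)
    (k n : ℕ) (hk : k < p)
    (N : Finset (Fin m)) :
    (OmegaN p q N k n).ncard =
      ∑ t ∈ Finset.range m, ibinom ((n : ℤ) - (t : ℤ) + (Nᶜ.card : ℤ) - 1) (m - 1) *
        (CSet p q Nᶜ (k + t * p)).ncard := by
  have hp : 0 < p := by omega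
  have hfin : (OmegaN p q N k n).Finite :=
    (finite_OmegaSet p q Finset.univ (k + n * p)).subset (Set.sep_subset _ _)
  rw [hfin.ncard_eq_sum_ncard_fiber fun x _ => Finset.mem_range.mpr (level_lt hp hm x)]
  refine Finset.sum_congr rfl fun t _ => ?_
  rw [← Nat.card_coe_set_eq, Nat.card_congr (levelFiberEquiv q N n t hk), Nat.card_prod,
    Nat.card_coe_set_eq, Nat.card_coe_set_eq,
    ncard_setOf_add_sum_eq (by rw [Fintype.card_fin]; exact hm), Fintype.card_fin, mul_comm]
  congr 2
  rw [Finset.card_compl, Fintype.card_fin, Nat.cast_sub (card_finset_fin_le N)]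
  push_cast
  ring

/-- **Proposition.** `|Ω_N(k+np)| = ∑_{t=0}^{m-1} binom(n-t+|N̄|-1, m-1) ⬝ γ(N̄, k+tp)`. -/
theorem omegaN_card (p m : ℕ) (hp : 1 ≤ p) (hm : 1 ≤ m) (q : Fin m → ℤ)
    (hq : ∀ i, IsCoprime (q i) (p : ℤ)) (k n : ℕ) (hk : k < p)
    (N : Finset (Fin m)) :
    (OmegaN p q N k n).ncard =
      ∑ t ∈ Finset.range m, ibinom ((n : ℤ) - (t : ℤ) + (Nᶜ.card : ℤ) - 1) (m - 1) *
        (CSet p q Nᶜ (k + t * p)).ncard :=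
  omegaN_card_general p m hm q k n hk N
end
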